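/- Let ε : R → A be a ring morphism, let Σ be the set of all square matrices over R that become invertible over A under ε, and let Σ^{-1}R be the Cohn localization of R inverting Σ. Then an endomorphism φ : (Σ^{-1}R)^n → (Σ^{-1}R)^n of a finitely generated free Σ^{-1}R-module is an automorphism if and only if the induced endomorphism ε(φ) : A^n → A^n is an A-module automorphism. -/

import Mathlib

/-!
Every matrix over `L` has the Gerasimov–Malcolmson form `M = f σ⁻¹ g` with `σ ∈ Σ` and `f`, `g`
over `R`: such matrices are closed under sums and products (use block triangular `σ`), so the
`x ∈ L` for which `(x)` has this form make up a subring containing `ρ(R)` in which `Σ` is still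
inverted, and by the universal property this subring is all of `L`.

Over any ring in which `σ` is invertible, the bordered matrix `N = [[σ, g], [-f, 0]]` is invertible
iff its Schur complement `f σ⁻¹ g` is. So if `ε'(M) = ε(f) ε(σ)⁻¹ ε(g)` is invertible, then
`ε(N)` is, i.e. `N ∈ Σ`; hence `ρ(N)` is invertible, and with it `M = ρ(f) ρ(σ)⁻¹ ρ(g)`.
-/

open Matrix
open scoped Ring

theorem Ring.inverse_eq_of_mul_eq_one {M₀ : Type*} [MonoidWithZero M₀] {x y : M₀}
    (h₁ : x * y = 1) (h₂ : y * x = 1) : x⁻¹ʳ = y :=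
  Ring.inverse_unit ⟨x, y, h₁, h₂⟩

namespace Matrix

variable {l m n α : Type*} [Fintype m] [Fintype n] [DecidableEq m] [DecidableEq n] [Ring α]

theorem mul_inverse_mul_cancel {A : Matrix m m α} (hA : IsUnit A) (B : Matrix m l α) :
    A * (A⁻¹ʳ * B) = B := by
  rw [← Matrix.mul_assoc, Ring.mul_inverse_cancel A hA, Matrix.one_mul]

theorem inverse_fromBlocks_zero₂₁ {A : Matrix m m α} (B : Matrix m n α) {D : Matrix n n α}
    (hA : IsUnit A) (hD : IsUnit D) :
    (fromBlocks A B 0 D)⁻¹ʳ = fromBlocks A⁻¹ʳ (-(A⁻¹ʳ * B * D⁻¹ʳ)) 0 D⁻¹ʳ := by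
  apply Ring.inverse_eq_of_mul_eq_one <;>
    simp [fromBlocks_multiply, ← fromBlocks_one, Matrix.mul_assoc, Ring.mul_inverse_cancel _ hA,
      Ring.mul_inverse_cancel _ hD, Ring.inverse_mul_cancel _ hA, Ring.inverse_mul_cancel _ hD,
      mul_inverse_mul_cancel hA]

theorem isUnit_fromBlocks_zero₂₁_of_isUnit {A : Matrix m m α} (B : Matrix m n α)
    {D : Matrix n n α} (hA : IsUnit A) (hD : IsUnit D) : IsUnit (fromBlocks A B 0 D) := by
  rw [Ring.isUnit_iff_mul_inverse_cancel, inverse_fromBlocks_zero₂₁ B hA hD]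
  simp [fromBlocks_multiply, ← fromBlocks_one, Matrix.mul_assoc, Ring.mul_inverse_cancel _ hA,
    Ring.mul_inverse_cancel _ hD, mul_inverse_mul_cancel hA]

theorem isUnit_fromBlocks_one_zero_one (C : Matrix n m α) :
    IsUnit (fromBlocks (1 : Matrix m m α) 0 C (1 : Matrix n n α)) :=
  isUnit_iff_exists.2 ⟨fromBlocks 1 0 (-C) 1, by simp [fromBlocks_multiply, ← fromBlocks_one],
    by simp [fromBlocks_multiply, ← fromBlocks_one]⟩

theorem isUnit_of_isUnit_fromBlocks_diagonal {A : Matrix m m α} {D : Matrix n n α}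
    (h : IsUnit (fromBlocks A 0 0 D)) : IsUnit D := by
  obtain ⟨W, h₁, h₂⟩ := isUnit_iff_exists.1 h
  rw [← fromBlocks_toBlocks W, fromBlocks_multiply] at h₁ h₂
  refine isUnit_iff_exists.2 ⟨W.toBlocks₂₂, ?_, ?_⟩
  · simpa [← fromBlocks_one] using congrArg toBlocks₂₂ h₁
  · simpa [← fromBlocks_one] using congrArg toBlocks₂₂ h₂

theorem fromBlocks_eq_mul_schur {A : Matrix m m α} (B : Matrix m n α) (C : Matrix n m α)
    (D : Matrix n n α) (hA : IsUnit A) :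
    fromBlocks A B C D = fromBlocks 1 0 (C * A⁻¹ʳ) 1 * fromBlocks A 0 0 (D - C * A⁻¹ʳ * B) *
      fromBlocks 1 (A⁻¹ʳ * B) 0 1 := by
  simp [fromBlocks_multiply, Matrix.mul_assoc, Ring.inverse_mul_cancel _ hA,
    mul_inverse_mul_cancel hA]

theorem isUnit_fromBlocks_iff_isUnit_schur {A : Matrix m m α} (B : Matrix m n α)
    (C : Matrix n m α) (D : Matrix n n α) (hA : IsUnit A) :
    IsUnit (fromBlocks A B C D) ↔ IsUnit (D - C * A⁻¹ʳ * B) := by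
  obtain ⟨L, hL⟩ := isUnit_fromBlocks_one_zero_one (m := m) (C * A⁻¹ʳ)
  obtain ⟨U, hU⟩ := isUnit_fromBlocks_zero₂₁_of_isUnit (A⁻¹ʳ * B) (isUnit_one (M := Matrix m m α))
    (isUnit_one (M := Matrix n n α))
  rw [fromBlocks_eq_mul_schur B C D hA, ← hL, ← hU, Units.isUnit_mul_units,
    Units.isUnit_units_mul]
  exact ⟨isUnit_of_isUnit_fromBlocks_diagonal, isUnit_fromBlocks_zero₂₁_of_isUnit 0 hA⟩

end Matrix

theorem map_ring_inverse {M N F : Type*} [MonoidWithZero M] [MonoidWithZero N] [FunLike F M N]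
    [MonoidHomClass F M N] (f : F) {x : M} (hx : IsUnit x) : f x⁻¹ʳ = (f x)⁻¹ʳ :=
  (Ring.inverse_eq_of_mul_eq_one (by rw [← map_mul, Ring.mul_inverse_cancel x hx, map_one])
    (by rw [← map_mul, Ring.inverse_mul_cancel x hx, map_one])).symm

theorem Subring.isUnit_of_isUnit_map_subtype {L κ : Type*} [Ring L] [Fintype κ] [DecidableEq κ]
    {S : Subring L} {X : Matrix κ κ S} (hX : IsUnit (X.map S.subtype))
    (hmem : ∀ i j, (X.map S.subtype)⁻¹ʳ i j ∈ S) : IsUnit X := by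
  set Y : Matrix κ κ S := of fun i j => ⟨_, hmem i j⟩
  have hY : Y.map S.subtype = (X.map S.subtype)⁻¹ʳ := rfl
  refine isUnit_iff_exists.2 ⟨Y, ?_, ?_⟩ <;> apply Matrix.map_injective S.subtype_injective <;>
    beta_reduce <;> rw [Matrix.map_mul, hY, Matrix.map_one _ (map_zero _) (map_one _)]
  · exact Ring.mul_inverse_cancel _ hX
  · exact Ring.inverse_mul_cancel _ hX

section CohnLocalization

variable {R A L : Type} [Ring R] [Ring A] [Ring L]

/-- `f` inverts `Σ`, the square matrices over `R` whose image under `ε` is invertible. -/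
def InvertsSigma {T : Type} [Ring T] (ε : R →+* A) (f : R →+* T) : Prop :=
  ∀ (n : ℕ) (M : Matrix (Fin n) (Fin n) R), IsUnit (M.map ε) → IsUnit (M.map f)

def IsCohnLocalization (ε : R →+* A) (ρ : R →+* L) : Prop :=
  InvertsSigma ε ρ ∧
    ∀ (T : Type) [Ring T] (f : R →+* T), InvertsSigma ε f → ∃! g : L →+* T, g.comp ρ = f

theorem InvertsSigma.isUnit_map {T : Type} [Ring T] {ε : R →+* A} {f : R →+* T}
    (hf : InvertsSigma ε f) {κ : Type*} [Fintype κ] [DecidableEq κ] {σ : Matrix κ κ R}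
    (hσ : IsUnit (σ.map ε)) : IsUnit (σ.map f) := by
  set e := Fintype.equivFin κ
  have key := hf _ (reindex e e σ) ((MulEquiv.isUnit_map (reindexAlgEquiv ℕ A e)).2 hσ)
  exact (MulEquiv.isUnit_map (reindexAlgEquiv ℕ T e)).1 key

/-- `M = f σ⁻¹ g` with `σ ∈ Σ`: the Gerasimov–Malcolmson normal form. -/
def IsFraction (ε : R →+* A) (ρ : R →+* L) {m n : Type} (M : Matrix m n L) : Prop :=
  ∃ (κ : Type) (_ : Fintype κ) (_ : DecidableEq κ) (σ : Matrix κ κ R) (f : Matrix m κ R)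
    (g : Matrix κ n R), IsUnit (σ.map ε) ∧ M = f.map ρ * (σ.map ρ)⁻¹ʳ * g.map ρ

variable {ε : R →+* A} {ρ : R →+* L} {l m n : Type}

theorem isFraction_map [Fintype n] [DecidableEq n] (M : Matrix m n R) :
    IsFraction ε ρ (M.map ρ) :=
  ⟨n, inferInstance, inferInstance, 1, M, 1, isUnit_one.map ε.mapMatrix,
    by simp [Matrix.map_one _ (map_zero ρ) (map_one ρ)]⟩

theorem isFraction_zero : IsFraction ε ρ (0 : Matrix m n L) :=
  ⟨Unit, inferInstance, inferInstance, 1, 0, 0, isUnit_one.map ε.mapMatrix, by simp⟩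

theorem IsFraction.neg {M : Matrix m n L} (hM : IsFraction ε ρ M) : IsFraction ε ρ (-M) := by
  obtain ⟨κ, _, _, σ, f, g, hσ, rfl⟩ := hM
  exact ⟨κ, inferInstance, inferInstance, σ, -f, g, hσ,
    by rw [Matrix.map_neg _ (map_neg ρ), Matrix.neg_mul, Matrix.neg_mul]⟩

theorem IsFraction.add (hρ : InvertsSigma ε ρ) {M N : Matrix m n L} (hM : IsFraction ε ρ M)
    (hN : IsFraction ε ρ N) : IsFraction ε ρ (M + N) := by
  obtain ⟨κ₁, _, _, σ₁, f₁, g₁, hσ₁, rfl⟩ := hM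
  obtain ⟨κ₂, _, _, σ₂, f₂, g₂, hσ₂, rfl⟩ := hN
  refine ⟨κ₁ ⊕ κ₂, inferInstance, inferInstance, fromBlocks σ₁ 0 0 σ₂, fromCols f₁ f₂,
    fromRows g₁ g₂, ?_, ?_⟩
  · simpa [fromBlocks_map] using isUnit_fromBlocks_zero₂₁_of_isUnit 0 hσ₁ hσ₂
  · simp only [fromBlocks_map, fromCols_map, fromRows_map, Matrix.map_zero, map_zero]
    rw [inverse_fromBlocks_zero₂₁ _ (hρ.isUnit_map hσ₁) (hρ.isUnit_map hσ₂)]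
    simp [fromCols_mul_fromBlocks, fromCols_mul_fromRows, Matrix.mul_assoc]

theorem IsFraction.mul (hρ : InvertsSigma ε ρ) [Fintype l] {M : Matrix m l L}
    {N : Matrix l n L} (hM : IsFraction ε ρ M) (hN : IsFraction ε ρ N) :
    IsFraction ε ρ (M * N) := by
  obtain ⟨κ₁, _, _, σ₁, f₁, g₁, hσ₁, rfl⟩ := hM
  obtain ⟨κ₂, _, _, σ₂, f₂, g₂, hσ₂, rfl⟩ := hN
  refine ⟨κ₁ ⊕ κ₂, inferInstance, inferInstance, fromBlocks σ₁ (-(g₁ * f₂)) 0 σ₂,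
    fromCols f₁ 0, fromRows 0 g₂, ?_, ?_⟩
  · simpa [fromBlocks_map] using isUnit_fromBlocks_zero₂₁_of_isUnit _ hσ₁ hσ₂
  · simp only [fromBlocks_map, fromCols_map, fromRows_map, Matrix.map_zero, map_zero]
    rw [inverse_fromBlocks_zero₂₁ _ (hρ.isUnit_map hσ₁) (hρ.isUnit_map hσ₂)]
    simp [fromCols_mul_fromBlocks, fromCols_mul_fromRows, Matrix.mul_assoc, Matrix.map_mul,
      Matrix.map_neg _ (map_neg ρ)]

/-- Cohn's rational closure of `ρ(R)`, encoded through `1 × 1` matrices. -/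
def rationalClosure (hρ : InvertsSigma ε ρ) : Subring L where
  carrier := {x | IsFraction ε ρ (of fun _ _ : Unit => x)}
  zero_mem' := isFraction_zero
  one_mem' := by
    show IsFraction ε ρ (of fun _ _ : Unit => (1 : L))
    rw [show (of fun _ _ : Unit => (1 : L)) = (1 : Matrix Unit Unit R).map ρ by ext; simp]
    exact isFraction_map 1
  add_mem' hx hy := hx.add hρ hy
  mul_mem' {x y} hx hy := by
    have hxy : (of fun _ _ : Unit => x * y) = (of fun _ _ => x) * of fun _ _ => y := by
      ext; simp [mul_apply]
    simpa [hxy] using hx.mul hρ hy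
  neg_mem' hx := hx.neg

theorem map_mem_rationalClosure (hρ : InvertsSigma ε ρ) (r : R) : ρ r ∈ rationalClosure hρ :=
  isFraction_map (of fun _ _ : Unit => r)

theorem inverse_apply_mem_rationalClosure (hρ : InvertsSigma ε ρ) {κ : Type} [Fintype κ]
    [DecidableEq κ] {σ : Matrix κ κ R} (hσ : IsUnit (σ.map ε)) (i j : κ) :
    (σ.map ρ)⁻¹ʳ i j ∈ rationalClosure hρ :=
  ⟨κ, inferInstance, inferInstance, σ, single () i 1, single j () 1, hσ, by ext; simp⟩

theorem IsCohnLocalization.eq_top_of_invertsSigma_codRestrict (hL : IsCohnLocalization ε ρ)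
    (S : Subring L) (hS : ∀ r, ρ r ∈ S) (hρS : InvertsSigma ε (ρ.codRestrict S hS)) :
    S = ⊤ := by
  obtain ⟨g, hg, -⟩ := hL.2 S _ hρS
  have hid : S.subtype.comp g = RingHom.id L :=
    (hL.2 L ρ hL.1).unique (by rw [RingHom.comp_assoc, hg]; rfl) (RingHom.id_comp ρ)
  refine eq_top_iff.2 fun x _ => ?_
  rw [← RingHom.id_apply x, ← hid]
  exact (g x).2

theorem IsCohnLocalization.rationalClosure_eq_top (hL : IsCohnLocalization ε ρ) :
    rationalClosure hL.1 = ⊤ := by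
  refine hL.eq_top_of_invertsSigma_codRestrict _ (map_mem_rationalClosure hL.1) fun n σ hσ => ?_
  have hσ' : (σ.map (ρ.codRestrict _ (map_mem_rationalClosure hL.1))).map
      (rationalClosure hL.1).subtype = σ.map ρ := rfl
  exact Subring.isUnit_of_isUnit_map_subtype (hσ' ▸ hL.1 n σ hσ)
    (hσ' ▸ inverse_apply_mem_rationalClosure hL.1 hσ)

theorem IsCohnLocalization.isFraction (hL : IsCohnLocalization ε ρ) [Fintype m] [Fintype n]
    [DecidableEq m] [DecidableEq n] (M : Matrix m n L) : IsFraction ε ρ M := by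
  have hentry (x : L) : IsFraction ε ρ (of fun _ _ : Unit => x) :=
    (hL.rationalClosure_eq_top ▸ Subring.mem_top x : x ∈ rationalClosure hL.1)
  have hsingle (i : m) (j : n) : IsFraction ε ρ (single i j (M i j)) := by
    have h := ((isFraction_map (single i () 1)).mul hL.1 (hentry (M i j))).mul hL.1
      (isFraction_map (single () j 1))
    simpa using h
  rw [matrix_eq_sum_single M]
  refine Finset.sum_induction _ _ (fun _ _ => IsFraction.add hL.1) isFraction_zero
    fun i _ => Finset.sum_induction _ _ (fun _ _ => IsFraction.add hL.1) isFraction_zero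
      fun j _ => hsingle i j

theorem isUnit_map_fromBlocks_iff {B : Type} [Ring B] (φ : R →+* B) {κ : Type} [Fintype κ]
    [DecidableEq κ] [Fintype m] [DecidableEq m] {σ : Matrix κ κ R} (hσ : IsUnit (σ.map φ))
    (f : Matrix m κ R) (g : Matrix κ m R) :
    IsUnit ((fromBlocks σ g (-f) 0).map φ) ↔ IsUnit (f.map φ * (σ.map φ)⁻¹ʳ * g.map φ) := by
  rw [fromBlocks_map, isUnit_fromBlocks_iff_isUnit_schur _ _ _ hσ]
  simp [Matrix.map_neg _ (map_neg φ), Matrix.neg_mul]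

theorem IsCohnLocalization.isUnit_iff_isUnit_map (hL : IsCohnLocalization ε ρ) (ε' : L →+* A)
    (hε' : ε'.comp ρ = ε) [Fintype m] [DecidableEq m] (M : Matrix m m L) :
    IsUnit M ↔ IsUnit (M.map ε') := by
  refine ⟨fun h => h.map ε'.mapMatrix, fun h => ?_⟩
  obtain ⟨κ, _, _, σ, f, g, hσ, rfl⟩ := hL.isFraction M
  have hσρ : IsUnit (σ.map ρ) := hL.1.isUnit_map hσ
  have hmap {p q : Type} (X : Matrix p q R) : (X.map ρ).map ε' = X.map ε := by
    rw [Matrix.map_map, ← hε', RingHom.coe_comp]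
  have hεM : (f.map ρ * (σ.map ρ)⁻¹ʳ * g.map ρ).map ε' = f.map ε * (σ.map ε)⁻¹ʳ * g.map ε := by
    rw [Matrix.map_mul, Matrix.map_mul, hmap, hmap, ← RingHom.mapMatrix_apply,
      map_ring_inverse _ hσρ, RingHom.mapMatrix_apply, hmap]
  rw [hεM, ← isUnit_map_fromBlocks_iff ε hσ] at h
  exact (isUnit_map_fromBlocks_iff ρ hσρ f g).1 (hL.1.isUnit_map h)

end CohnLocalization

/-- Sheiham: let `ε : R → A` be a ring morphism, `Σ` the set of all
square matrices over `R` becoming invertible over `A`, and `ρ : R → L` a Cohn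
localization of `R` inverting `Σ` (i.e. `ρ` sends `Σ` to invertible matrices and
is universal with this property), with `ε' : L → A` the induced extension of `ε`.
Then a square matrix `M` over `L` (an endomorphism of a f.g. free `L`-module)
is invertible if and only if its image `ε'(M)` over `A` is invertible. -/
theorem stmt9 {R A L : Type} [Ring R] [Ring A] [Ring L]
    (ε : R →+* A) (ρ : R →+* L)
    (hρ : ∀ (n : ℕ) (M : Matrix (Fin n) (Fin n) R),
      IsUnit (M.map ε) → IsUnit (M.map ρ))
    (huniv : ∀ (T : Type) [Ring T] (f : R →+* T),
      (∀ (n : ℕ) (M : Matrix (Fin n) (Fin n) R),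
        IsUnit (M.map ε) → IsUnit (M.map f)) →
      ∃! g : L →+* T, g.comp ρ = f)
    (ε' : L →+* A) (hε' : ε'.comp ρ = ε)
    (n : ℕ) (M : Matrix (Fin n) (Fin n) L) :
    IsUnit M ↔ IsUnit (M.map ε') :=
  IsCohnLocalization.isUnit_iff_isUnit_map ⟨hρ, huniv⟩ ε' hε' M
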